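/- Let S = UΛUᵀ with UᵀU = I_m and ρ > 0. Then (2⁻¹S⊗I_p + 2⁻¹I_p⊗S + ρI_{p²})·{−ρ⁻¹I_p⊗(UΛ₂Uᵀ)} = −(2ρ)⁻¹I_p⊗(UΛUᵀ) − (2ρ)⁻¹(U⊗U)(Λ⊗Λ₂)(Uᵀ⊗Uᵀ). -/

import Mathlib

open Matrix Kronecker

/-!
Put `A = U Λ₂ Uᵀ`. Since `I ⊗ A` commutes past the Kronecker factors, the left factor acts as
`½ S ⊗ A + I ⊗ (½ S A + ρ A)`. Because `Uᵀ U = I`, conjugation by `U` is multiplicative, so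
`S A + 2ρ A = U (Λ + 2ρ I) Λ₂ Uᵀ = U Λ Uᵀ`, the last step being the scalar identity
`(τ + 2ρ) · τ / (τ + 2ρ) = τ`, valid as `τ ≥ 0` and `ρ > 0`. Finally
`S ⊗ A = (U ⊗ U)(Λ ⊗ Λ₂)(Uᵀ ⊗ Uᵀ)` by the mixed-product property.
-/

namespace Matrix

variable {K R : Type*} {m n : Type*} [Fintype m] [Fintype n]

theorem diagonal_add_smul_one_mul_diagonal_div [DecidableEq m] [Field K] (τ : m → K) (c : K)
    (hτ : ∀ i, τ i + c ≠ 0) :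
    (diagonal τ + c • (1 : Matrix m m K)) * diagonal (fun i => τ i / (τ i + c)) = diagonal τ := by
  rw [smul_one_eq_diagonal, diagonal_add, diagonal_mul_diagonal]
  congr 1
  funext i
  field_simp [hτ i]

theorem conj_mul_conj_of_transpose_mul_self [DecidableEq m] [CommRing R] {U : Matrix n m R}
    (hU : Uᵀ * U = 1) (X Y : Matrix m m R) : U * X * Uᵀ * (U * Y * Uᵀ) = U * (X * Y) * Uᵀ := by
  simp only [Matrix.mul_assoc]
  rw [← Matrix.mul_assoc Uᵀ U, hU, Matrix.one_mul]

theorem smul_kroneckerSum_add_smul_one_mul_one_kronecker [DecidableEq n] [CommRing R] (a c : R)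
    (B A : Matrix n n R) :
    (a • (B ⊗ₖ (1 : Matrix n n R)) + a • ((1 : Matrix n n R) ⊗ₖ B) + c • 1)
        * ((1 : Matrix n n R) ⊗ₖ A)
      = a • (B ⊗ₖ A) + (1 : Matrix n n R) ⊗ₖ (a • (B * A) + c • A) := by
  rw [add_mul, add_mul, smul_mul_assoc, smul_mul_assoc, smul_mul_assoc, ← mul_kronecker_mul,
    ← mul_kronecker_mul, Matrix.one_mul, Matrix.mul_one, Matrix.one_mul, Matrix.one_mul,
    kronecker_add, kronecker_smul, kronecker_smul, add_assoc]

end Matrix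

theorem stmt_8_general (p m : ℕ)
    (U : Matrix (Fin p) (Fin m) ℝ) (hU : Uᵀ * U = 1)
    (τ : Fin m → ℝ) (hτ : ∀ i, 0 ≤ τ i)
    (Λ : Matrix (Fin m) (Fin m) ℝ) (hΛ : Λ = Matrix.diagonal τ)
    (S : Matrix (Fin p) (Fin p) ℝ) (hS : S = U * Λ * Uᵀ)
    (ρ : ℝ) (hρ : 0 < ρ)
    (Λ₂ : Matrix (Fin m) (Fin m) ℝ)
    (hΛ₂ : Λ₂ = Matrix.diagonal (fun i => τ i / (τ i + 2 * ρ))) :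
    ((2⁻¹ : ℝ) • (S ⊗ₖ (1 : Matrix (Fin p) (Fin p) ℝ))
        + (2⁻¹ : ℝ) • ((1 : Matrix (Fin p) (Fin p) ℝ) ⊗ₖ S)
        + ρ • (1 : Matrix (Fin p × Fin p) (Fin p × Fin p) ℝ))
      * (-(ρ⁻¹ • ((1 : Matrix (Fin p) (Fin p) ℝ) ⊗ₖ (U * Λ₂ * Uᵀ))))
    = -((2 * ρ)⁻¹ • ((1 : Matrix (Fin p) (Fin p) ℝ) ⊗ₖ (U * Λ * Uᵀ)))
      - (2 * ρ)⁻¹ • ((U ⊗ₖ U) * (Λ ⊗ₖ Λ₂) * (Uᵀ ⊗ₖ Uᵀ)) := by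
  have hdiag : (Λ + (2 * ρ) • 1) * Λ₂ = Λ := by
    rw [hΛ, hΛ₂]
    exact diagonal_add_smul_one_mul_diagonal_div τ _ fun i => by linarith [hτ i]
  have hconj : S * (U * Λ₂ * Uᵀ) + (2 * ρ) • (U * Λ₂ * Uᵀ) = U * Λ * Uᵀ := by
    conv_rhs => rw [← hdiag]
    rw [hS, conj_mul_conj_of_transpose_mul_self hU]
    simp only [Matrix.add_mul, Matrix.mul_add, Matrix.smul_mul, Matrix.mul_smul, Matrix.one_mul]
  have hmixed : S ⊗ₖ (U * Λ₂ * Uᵀ) = (U ⊗ₖ U) * (Λ ⊗ₖ Λ₂) * (Uᵀ ⊗ₖ Uᵀ) := by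
    rw [hS, ← mul_kronecker_mul, ← mul_kronecker_mul]
  have hinner :
      (2⁻¹ : ℝ) • (S * (U * Λ₂ * Uᵀ)) + ρ • (U * Λ₂ * Uᵀ) = (2⁻¹ : ℝ) • (U * Λ * Uᵀ) := by
    rw [← hconj]
    module
  rw [mul_neg, mul_smul_comm, smul_kroneckerSum_add_smul_one_mul_one_kronecker, hinner, hmixed,
    kronecker_smul]
  module

/-- With `S = U Λ Uᵀ`, `Uᵀ U = I_m`, `ρ > 0`,
`(2⁻¹ S⊗I + 2⁻¹ I⊗S + ρI)·{−ρ⁻¹ I⊗(UΛ₂Uᵀ)}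
 = −(2ρ)⁻¹ I⊗(UΛUᵀ) − (2ρ)⁻¹ (U⊗U)(Λ⊗Λ₂)(Uᵀ⊗Uᵀ)`. -/
theorem stmt_8 (p m : ℕ) (hp : 0 < p) (hm : 0 < m)
    (U : Matrix (Fin p) (Fin m) ℝ) (hU : Uᵀ * U = 1)
    (τ : Fin m → ℝ) (hτ : ∀ i, 0 ≤ τ i)
    (Λ : Matrix (Fin m) (Fin m) ℝ) (hΛ : Λ = Matrix.diagonal τ)
    (S : Matrix (Fin p) (Fin p) ℝ) (hS : S = U * Λ * Uᵀ)
    (ρ : ℝ) (hρ : 0 < ρ)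
    (Λ₂ : Matrix (Fin m) (Fin m) ℝ)
    (hΛ₂ : Λ₂ = Matrix.diagonal (fun i => τ i / (τ i + 2 * ρ))) :
    ((2⁻¹ : ℝ) • (S ⊗ₖ (1 : Matrix (Fin p) (Fin p) ℝ))
        + (2⁻¹ : ℝ) • ((1 : Matrix (Fin p) (Fin p) ℝ) ⊗ₖ S)
        + ρ • (1 : Matrix (Fin p × Fin p) (Fin p × Fin p) ℝ))
      * (-(ρ⁻¹ • ((1 : Matrix (Fin p) (Fin p) ℝ) ⊗ₖ (U * Λ₂ * Uᵀ))))
    = -((2 * ρ)⁻¹ • ((1 : Matrix (Fin p) (Fin p) ℝ) ⊗ₖ (U * Λ * Uᵀ)))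
      - (2 * ρ)⁻¹ • ((U ⊗ₖ U) * (Λ ⊗ₖ Λ₂) * (Uᵀ ⊗ₖ Uᵀ)) :=
  stmt_8_general p m U hU τ hτ Λ hΛ S hS ρ hρ Λ₂ hΛ₂
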